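/- arXiv:2412.11496 — 2 statements merged into one kernel-verified Lean document; each statement's English description precedes it below -/
import Mathlib

section
/- Let α_1, …, α_{N+N_r−1} be pairwise distinct nonzero elements of a field F, with S_n = V G_n^{-1} as above. Then for every subset S ⊆ {1,…,N} \ {n} with |S| ≤ N_r − 1, the submatrix of S_n consisting of the rows indexed by S and the columns indexed by {2, 3, …, N_r} has rank |S|. -/
variable {F : Type} [Field F] {N r : ℕ}

/-- The `N × (r+1)` Vandermonde matrix `V` with nodes `α_1, …, α_N`. -/
def Vmat (α : Fin N → F) : Matrix (Fin N) (Fin (r + 1)) F :=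
  Matrix.of fun i j => α i ^ (j : ℕ)

/-- The `(r+1) × (r+1)` Vandermonde matrix `G_n` with row nodes
`α_n, β_1, …, β_r` (where `β_i` plays the role of `α_{N+i}`). -/
def Gmat (α : Fin N → F) (β : Fin r → F) (n : Fin N) :
    Matrix (Fin (r + 1)) (Fin (r + 1)) F :=
  Matrix.of fun i j => ((Fin.cons (α n) β : Fin (r + 1) → F) i) ^ (j : ℕ)

/-- The `(r+1) × r` matrix `G̃` whose first row is zero and whose row `i+1`
is the Vandermonde row `(1, β_i, …, β_i^{r-1})`. -/
def Gtil (β : Fin r → F) : Matrix (Fin (r + 1)) (Fin r) F :=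
  Matrix.of fun i j => ((Fin.cons 0 (fun i' => β i' ^ (j : ℕ)) : Fin (r + 1) → F) i)

/-- The matrix `S_n = V · G_n⁻¹`. -/
noncomputable def Smat (α : Fin N → F) (β : Fin r → F) (n : Fin N) :
    Matrix (Fin N) (Fin (r + 1)) F :=
  Vmat α * (Gmat α β n)⁻¹

/-!
Since `S_n G_n = V`, row `i` of `S_n` holds the coordinates of the power vector
`(α_i ^ j)_{j ≤ r}` in the basis of power vectors at `α_n, β_1, …, β_r`. A combination of the
rows indexed by `S` that vanishes on the columns `2, …, N_r` thus becomes a linear relation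
between the power vectors at the at most `r + 1` distinct nodes `α_n` and `α_i` (`i ∈ S`),
which is trivial because a square Vandermonde matrix on distinct nodes is invertible.
-/

open Function Matrix

theorem Matrix.eq_zero_of_forall_lt_sum_mul_pow_eq_zero {R : Type*} [CommRing R] [IsDomain R]
    {p m : ℕ} {x c : Fin p → R} (hx : Injective x) (hpm : p ≤ m)
    (h : ∀ j < m, ∑ i, c i * x i ^ j = 0) : c = 0 :=
  eq_zero_of_vecMul_eq_zero (det_vandermonde_ne_zero_iff.mpr hx)
    (funext fun j => h j (j.2.trans_le hpm))

theorem isUnit_det_Gmat {α : Fin N → F} {β : Fin r → F} {n : Fin N}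
    (hG : Injective (Fin.cons (α n) β : Fin (r + 1) → F)) : IsUnit (Gmat α β n).det :=
  (det_vandermonde_ne_zero_iff.mpr hG).isUnit

-- The product in `Smat` elaborates through the `CStarMatrix` instance, on which `Matrix` lemmas
-- do not rewrite.
theorem Smat_eq_mul (α : Fin N → F) (β : Fin r → F) (n : Fin N) :
    Smat α β n = Vmat (r := r) α * (Gmat α β n)⁻¹ := rfl

theorem Smat_mul_Gmat {α : Fin N → F} {β : Fin r → F} {n : Fin N}
    (hG : Injective (Fin.cons (α n) β : Fin (r + 1) → F)) :
    Smat α β n * Gmat α β n = Vmat α := by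
  rw [Smat_eq_mul, Matrix.mul_assoc, nonsing_inv_mul _ (isUnit_det_Gmat hG),
    Matrix.mul_one]

theorem vecMul_submatrix_Vmat {ι : Type*} [Fintype ι] {α : Fin N → F} {β : Fin r → F}
    {n : Fin N} (hG : Injective (Fin.cons (α n) β : Fin (r + 1) → F)) (s : ι → Fin N)
    (g : ι → F) :
    g ᵥ* (Vmat α).submatrix s id = (g ᵥ* (Smat α β n).submatrix s id) ᵥ* Gmat α β n := by
  rw [vecMul_vecMul, ← Smat_mul_Gmat hG, submatrix_mul _ _ s id id bijective_id, submatrix_id_id]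

theorem linearIndependent_row_submatrix_Smat_succ {p : ℕ} {α : Fin N → F} {β : Fin r → F}
    {n : Fin N} (hG : Injective (Fin.cons (α n) β : Fin (r + 1) → F)) {s : Fin p → Fin N}
    (hs : Injective (Fin.cons (α n) (α ∘ s) : Fin (p + 1) → F)) (hp : p ≤ r) :
    LinearIndependent F ((Smat α β n).submatrix s Fin.succ).row := by
  rw [Fintype.linearIndependent_iff]
  intro g hg
  set w := g ᵥ* (Smat α β n).submatrix s id
  have hw : ∀ k : Fin r, w k.succ = 0 := fun k => by
    simpa [w, vecMul, dotProduct, Finset.sum_apply] using congrFun hg k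
  have hcomb (j : Fin (r + 1)) : ∑ i, g i * α (s i) ^ (j : ℕ) = w 0 * α n ^ (j : ℕ) :=
    calc ∑ i, g i * α (s i) ^ (j : ℕ) = (g ᵥ* (Vmat α).submatrix s id) j := rfl
      _ = (w ᵥ* Gmat α β n) j := by rw [vecMul_submatrix_Vmat hG]
      _ = w 0 * α n ^ (j : ℕ) := by simp [vecMul, dotProduct, Fin.sum_univ_succ, hw, Gmat]
  have hzero : (Fin.cons (-w 0) g : Fin (p + 1) → F) = 0 :=
    eq_zero_of_forall_lt_sum_mul_pow_eq_zero hs (Nat.succ_le_succ hp) fun j hj => by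
      simp [Fin.sum_univ_succ, hcomb ⟨j, hj⟩]
  exact fun i => by simpa using congrFun hzero i.succ

theorem Smat_rows_cols_tail_rank_general
    {F : Type} [Field F] (N r : ℕ)
    (α : Fin N → F) (β : Fin r → F)
    (hinj : Function.Injective (Sum.elim α β))
    (n : Fin N)
    (S : Finset (Fin N)) (hnS : n ∉ S) (hS : S.card ≤ r) :
    ((Smat α β n).submatrix
      (fun i : Fin S.card => ((S.orderIsoOfFin rfl i : S) : Fin N))
      (fun j : Fin r => j.succ)).rank = S.card := by
  obtain ⟨hα, hβ, hαβ⟩ := Sum.elim_injective.mp hinj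
  have hG : Injective (Fin.cons (α n) β : Fin (r + 1) → F) :=
    Fin.cons_injective_iff.mpr ⟨fun ⟨k, hk⟩ => hαβ n k hk.symm, hβ⟩
  have hs : Injective (Fin.cons (α n) (α ∘ S.orderEmbOfFin rfl) : Fin (S.card + 1) → F) :=
    Fin.cons_injective_iff.mpr
      ⟨fun ⟨i, hi⟩ => hnS (hα hi ▸ S.orderEmbOfFin_mem rfl i),
        hα.comp (S.orderEmbOfFin rfl).injective⟩
  simpa using (linearIndependent_row_submatrix_Smat_succ hG hs hS).rank_matrix

/-- For `S ⊆ [N] \ {n}` with `|S| ≤ N_r − 1 = r`, the submatrix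
of `S_n` with rows in `S` and columns `2, …, N_r` has rank `|S|`. -/
theorem Smat_rows_cols_tail_rank
    {F : Type} [Field F] (N r : ℕ) (hN : 1 ≤ N)
    (α : Fin N → F) (β : Fin r → F)
    (hinj : Function.Injective (Sum.elim α β))
    (h0 : ∀ x : Fin N ⊕ Fin r, Sum.elim α β x ≠ 0)
    (n : Fin N)
    (S : Finset (Fin N)) (hnS : n ∉ S) (hS : S.card ≤ r) :
    ((Smat α β n).submatrix
      (fun i : Fin S.card => ((S.orderIsoOfFin rfl i : S) : Fin N))
      (fun j : Fin r => j.succ)).rank = S.card :=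
  Smat_rows_cols_tail_rank_general N r α β hinj n S hnS hS
end

section
/- Let Ω be a finite probability space and let W, Y_1, …, Y_{N_r} be random variables on Ω such that H(W) = L log q, I(W; Y_1, …, Y_T) = 0, H(W | Y_1, …, Y_{N_r}) = 0, and each Y_n takes values in a set of cardinality at most q^{L_Y}. Then L ≤ (N_r − T) · L_Y. -/
/-!
Security gives `H(W) = H(W, Y_{≤T}) - H(Y_{≤T})`, and decodability gives `H(W, Y) = H(Y)`.
Since `(W, Y_{≤T})` is a function of `(W, Y)` and `Y` a function of `(Y_{≤T}, Y_{>T})`,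
monotonicity of entropy under functions and subadditivity yield `H(W) ≤ H(Y_{>T})`, and the
`N_r - T` remaining responses take at most `q ^ ((N_r - T) L_Y)` values. Subadditivity and the
bound `H(X) ≤ log #values` are both instances of Gibbs' inequality `∑ P log Q ≤ ∑ P log P`.
-/

open Finset

variable {Ω : Type} [Fintype Ω]

/-- Probability that the random variable `X` takes the value `s`, for the
probability mass function `p` on the finite sample space `Ω`. -/
def probOf {S : Type} [DecidableEq S] (p : Ω → ℝ) (X : Ω → S) (s : S) : ℝ :=
  ∑ ω ∈ Finset.univ.filter (fun ω => X ω = s), p ω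

/-- Shannon entropy (natural-log units) of a random variable `X` on the finite
probability space `(Ω, p)` (with the convention `0 · log 0 = 0`, which holds
definitionally since `Real.log 0 = 0`). -/
noncomputable def entropy {S : Type} [Fintype S] [DecidableEq S]
    (p : Ω → ℝ) (X : Ω → S) : ℝ :=
  -∑ s : S, probOf p X s * Real.log (probOf p X s)

/-- Conditional Shannon entropy `H(X | Y) = H(X, Y) − H(Y)`. -/
noncomputable def condEntropy {S T : Type} [Fintype S] [DecidableEq S]
    [Fintype T] [DecidableEq T] (p : Ω → ℝ) (X : Ω → S) (Y : Ω → T) : ℝ :=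
  entropy p (fun ω => (X ω, Y ω)) - entropy p Y

/-- Mutual information `I(X ; Y) = H(X) + H(Y) − H(X, Y)`. -/
noncomputable def mutualInfo {S T : Type} [Fintype S] [DecidableEq S]
    [Fintype T] [DecidableEq T] (p : Ω → ℝ) (X : Ω → S) (Y : Ω → T) : ℝ :=
  entropy p X + entropy p Y - entropy p (fun ω => (X ω, Y ω))

open Real

theorem sum_mul_log_le_sum_mul_log {ι : Type*} [Fintype ι] {P Q : ι → ℝ}
    (hP : ∀ i, 0 ≤ P i) (hQ : ∀ i, 0 ≤ Q i) (hPQ : ∀ i, 0 < P i → 0 < Q i)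
    (hsum : ∑ i, Q i ≤ ∑ i, P i) :
    ∑ i, P i * log (Q i) ≤ ∑ i, P i * log (P i) := by
  have hterm : ∀ i, P i * log (Q i) - P i * log (P i) ≤ Q i - P i := by
    intro i
    rcases (hP i).eq_or_lt with h | h
    · simp [← h, hQ i]
    have hlog := log_le_sub_one_of_pos (div_pos (hPQ i h) h)
    rw [log_div (hPQ i h).ne' h.ne'] at hlog
    calc P i * log (Q i) - P i * log (P i) = P i * (log (Q i) - log (P i)) := by ring
      _ ≤ P i * (Q i / P i - 1) := mul_le_mul_of_nonneg_left hlog h.le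
      _ = Q i - P i := by field_simp
  have htotal := sum_le_sum fun i (_ : i ∈ univ) => hterm i
  rw [sum_sub_distrib, sum_sub_distrib] at htotal
  linarith

section Entropy

variable (p : Ω → ℝ)

theorem probOf_nonneg {S : Type} [DecidableEq S] (hp : ∀ ω, 0 ≤ p ω) (X : Ω → S) (s : S) :
    0 ≤ probOf p X s :=
  sum_nonneg fun ω _ => hp ω

theorem le_probOf_self {S : Type} [DecidableEq S] (hp : ∀ ω, 0 ≤ p ω) (X : Ω → S)
    (ω : Ω) : p ω ≤ probOf p X (X ω) :=
  single_le_sum (fun ω' _ => hp ω') (by simp)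

theorem probOf_le_probOf_comp {S T : Type} [DecidableEq S] [DecidableEq T]
    (hp : ∀ ω, 0 ≤ p ω) (f : S → T) (X : Ω → S) (s : S) :
    probOf p X s ≤ probOf p (fun ω => f (X ω)) (f s) :=
  sum_le_sum_of_subset_of_nonneg (fun ω => by simp_all) fun ω _ _ => hp ω

theorem sum_probOf_mul {S : Type} [Fintype S] [DecidableEq S] (X : Ω → S) (g : S → ℝ) :
    ∑ s, probOf p X s * g s = ∑ ω, p ω * g (X ω) := by
  calc ∑ s, probOf p X s * g s = ∑ s, ∑ ω with X ω = s, p ω * g (X ω) := by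
        refine sum_congr rfl fun s _ => ?_
        rw [probOf, sum_mul]
        exact sum_congr rfl fun ω hω => by rw [(mem_filter.1 hω).2]
    _ = ∑ ω, p ω * g (X ω) := sum_fiberwise _ _ _

theorem sum_probOf {S : Type} [Fintype S] [DecidableEq S] (X : Ω → S) :
    ∑ s, probOf p X s = ∑ ω, p ω := by
  simpa using sum_probOf_mul p X 1

theorem entropy_eq_neg_sum {S : Type} [Fintype S] [DecidableEq S] (X : Ω → S) :
    entropy p X = -∑ ω, p ω * log (probOf p X (X ω)) := by
  rw [entropy, sum_probOf_mul p X fun s => log (probOf p X s)]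

theorem entropy_le_of_eq_comp {S T : Type} [Fintype S] [DecidableEq S] [Fintype T]
    [DecidableEq T] (hp : ∀ ω, 0 ≤ p ω) (f : S → T) {X : Ω → T} {Z : Ω → S}
    (hX : ∀ ω, X ω = f (Z ω)) :
    entropy p X ≤ entropy p Z := by
  obtain rfl : X = fun ω => f (Z ω) := funext hX
  rw [entropy_eq_neg_sum, entropy_eq_neg_sum, neg_le_neg_iff]
  refine sum_le_sum fun ω _ => ?_
  rcases (hp ω).eq_or_lt with h | h
  · simp [← h]
  have hZ : 0 < probOf p Z (Z ω) := h.trans_le (le_probOf_self p hp Z ω)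
  exact mul_le_mul_of_nonneg_left (log_le_log hZ (probOf_le_probOf_comp p hp f Z _)) h.le

variable {p} (hp : ∀ ω, 0 ≤ p ω) (hp1 : ∑ ω, p ω = 1)
include hp hp1

theorem entropy_le_log_card {S : Type} [Fintype S] [DecidableEq S] (X : Ω → S) :
    entropy p X ≤ log (Fintype.card S) := by
  have hsum : ∑ s, probOf p X s = 1 := by rw [sum_probOf, hp1]
  have hgibbs := sum_mul_log_le_sum_mul_log (Q := fun _ : S => (Fintype.card S : ℝ)⁻¹)
    (probOf_nonneg p hp X) (fun _ => by positivity)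
    (fun s _ => inv_pos.2 (Nat.cast_pos.2 (Fintype.card_pos_iff.2 ⟨s⟩)))
    (by rw [hsum, sum_const, card_univ, nsmul_eq_mul]; exact mul_inv_le_one)
  rw [← sum_mul, hsum, one_mul, log_inv] at hgibbs
  rw [entropy]
  linarith

theorem entropy_le_mul_log_of_card_le_pow {S : Type} [Fintype S] [DecidableEq S]
    (X : Ω → S) {q : ℝ} {m : ℕ} (hS : (Fintype.card S : ℝ) ≤ q ^ m) :
    entropy p X ≤ m * log q := by
  obtain ⟨ω⟩ : Nonempty Ω := by
    by_contra h
    simp [not_nonempty_iff.1 h] at hp1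
  have hcard : (0 : ℝ) < Fintype.card S := Nat.cast_pos.2 (Fintype.card_pos_iff.2 ⟨X ω⟩)
  calc entropy p X ≤ log (Fintype.card S) := entropy_le_log_card hp hp1 X
    _ ≤ log (q ^ m) := log_le_log hcard hS
    _ = m * log q := Real.log_pow q m

theorem entropy_pair_le_add {S T : Type} [Fintype S] [DecidableEq S] [Fintype T] [DecidableEq T]
    (X : Ω → S) (Z : Ω → T) :
    entropy p (fun ω => (X ω, Z ω)) ≤ entropy p X + entropy p Z := by
  have hfst (st : S × T) : probOf p (fun ω => (X ω, Z ω)) st ≤ probOf p X st.1 :=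
    probOf_le_probOf_comp p hp Prod.fst (fun ω => (X ω, Z ω)) st
  have hsnd (st : S × T) : probOf p (fun ω => (X ω, Z ω)) st ≤ probOf p Z st.2 :=
    probOf_le_probOf_comp p hp Prod.snd (fun ω => (X ω, Z ω)) st
  have hgibbs := sum_mul_log_le_sum_mul_log (P := probOf p fun ω => (X ω, Z ω))
    (Q := fun st : S × T => probOf p X st.1 * probOf p Z st.2)
    (probOf_nonneg p hp _) (fun _ => mul_nonneg (probOf_nonneg p hp _ _) (probOf_nonneg p hp _ _))
    (fun st h => mul_pos (h.trans_le (hfst st)) (h.trans_le (hsnd st)))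
    (by rw [Fintype.sum_prod_type, ← sum_mul_sum, sum_probOf, sum_probOf, sum_probOf, hp1,
      one_mul])
  have hsplit : ∑ ω, p ω * log (probOf p X (X ω) * probOf p Z (Z ω))
      = ∑ ω, p ω * log (probOf p X (X ω)) + ∑ ω, p ω * log (probOf p Z (Z ω)) := by
    rw [← sum_add_distrib]
    refine sum_congr rfl fun ω _ => ?_
    rcases (hp ω).eq_or_lt with h | h
    · simp [← h]
    rw [log_mul (h.trans_le (le_probOf_self p hp X ω)).ne'
      (h.trans_le (le_probOf_self p hp Z ω)).ne', mul_add]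
  rw [(sum_probOf_mul p (fun ω => (X ω, Z ω))
    fun st => log (probOf p X st.1 * probOf p Z st.2)).trans hsplit] at hgibbs
  rw [entropy, entropy_eq_neg_sum p X, entropy_eq_neg_sum p Z]
  linarith

end Entropy

/-- Converse bound for the helper-to-master rate. If
`H(W) = L log q`, `W` is independent of the first `T` responses, `W` is
determined by all `N_r` responses, and each response takes at most `q^{L_Y}`
values, then `L ≤ (N_r − T) · L_Y`. -/
theorem helper_to_master_converse
    {Ω : Type} [Fintype Ω] (p : Ω → ℝ)
    (hp : ∀ ω, 0 ≤ p ω) (hp1 : ∑ ω : Ω, p ω = 1)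
    (q : ℝ) (hq : 1 < q) (L LY Nr T : ℕ) (hT : T ≤ Nr)
    {WT : Type} [Fintype WT] [DecidableEq WT] (W : Ω → WT)
    (hW : entropy p W = (L : ℝ) * Real.log q)
    {V : Type} [Fintype V] [DecidableEq V] (Y : Fin Nr → Ω → V)
    (hV : (Fintype.card V : ℝ) ≤ q ^ LY)
    (hsec : mutualInfo p W (fun ω => fun i : Fin T => Y (Fin.castLE hT i) ω) = 0)
    (hdec : condEntropy p W (fun ω => fun n : Fin Nr => Y n ω) = 0) :
    (L : ℝ) ≤ ((Nr : ℝ) - T) * LY := by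
  set A := fun ω => fun i : Fin T => Y (Fin.castLE hT i) ω
  set F := fun ω => fun n : Fin Nr => Y n ω
  set B := fun ω => fun j : Fin (Nr - T) => Y ⟨T + j, by omega⟩ ω
  have hWA : entropy p (fun ω => (W ω, A ω)) ≤ entropy p (fun ω => (W ω, F ω)) :=
    entropy_le_of_eq_comp p hp (fun wy => (wy.1, fun i => wy.2 (Fin.castLE hT i))) fun _ => rfl
  have hFAB : entropy p F ≤ entropy p (fun ω => (A ω, B ω)) := by
    refine entropy_le_of_eq_comp p hp
      (fun ab (n : Fin Nr) =>
        if h : (n : ℕ) < T then ab.1 ⟨n, h⟩ else ab.2 ⟨n - T, by omega⟩)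
      fun ω => funext fun n => ?_
    split_ifs with h
    · rfl
    · exact congrArg (Y · ω) (Fin.ext (by dsimp only; omega))
  have hB : entropy p B ≤ ((Nr - T) * LY : ℕ) * log q := by
    refine entropy_le_mul_log_of_card_le_pow hp hp1 B ?_
    rw [Fintype.card_fun, Fintype.card_fin, Nat.cast_pow, mul_comm, pow_mul]
    exact pow_le_pow_left₀ (Nat.cast_nonneg _) hV _
  rw [mutualInfo] at hsec
  rw [condEntropy] at hdec
  have hL : (L : ℝ) * log q ≤ ((Nr - T) * LY : ℕ) * log q :=
    calc (L : ℝ) * log q = entropy p (fun ω => (W ω, A ω)) - entropy p A := by linarith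
      _ ≤ entropy p F - entropy p A := by linarith
      _ ≤ entropy p B := by linarith [entropy_pair_le_add hp hp1 A B]
      _ ≤ ((Nr - T) * LY : ℕ) * log q := hB
  rw [mul_le_mul_iff_of_pos_right (log_pos hq)] at hL
  push_cast [hT] at hL
  exact hL
end
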